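/- Let M be a sound MUL-tree on X and let u, v be vertices of M. Then u ∼ v if and only if the directed paths Ψ_{F(M)}⁻¹(u) and Ψ_{F(M)}⁻¹(v) in F(M) have the same end vertex (which is necessarily a tree vertex of F(M)). -/

import Mathlib

/- ------------------------------------------------------------------
Common combinatorial framework for phylogenetic networks, MUL-trees,
un-fold and fold-up operations, following Huber--Moulton--Scornavacca--
Steel and the paper "Three applications of un-fold/fold-up operations
for stable phylogenetic networks".

A `Net` is a rooted directed multigraph: `arcs u v` records the number
of parallel arcs from `u` to `v`.  Directed walks are recorded as lists
of *arc tokens* `(u, v, i)` (the `i`-th parallel arc from `u` to `v`),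
so that parallel arcs give rise to different directed paths.
------------------------------------------------------------------- -/

open Classical

universe u v w

namespace Phylo

/-- A rooted directed multigraph on the vertex type `V`:  `arcs u v` is the
number of parallel arcs from `u` to `v`, `verts` is the vertex set and
`root` the root. -/
structure Net (V : Type u) where
  verts : Set V
  arcs : V → V → ℕ
  root : V

/-- An arc token: `(u, v, i)` stands for the `i`-th parallel arc from `u` to `v`. -/
abbrev Arc (V : Type u) := V × V × ℕ

namespace Net

variable {V : Type u}

/-- The arc token `a` is a genuine arc of `N`. -/
def okArc (N : Net V) (a : Arc V) : Prop :=
  a.1 ∈ N.verts ∧ a.2.1 ∈ N.verts ∧ a.2.2 < N.arcs a.1 a.2.1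

/-- `l` is a directed walk (possibly trivial) starting at the vertex `u`,
recorded as the list of its arc tokens. -/
def WalkFrom (N : Net V) (u : V) (l : List (Arc V)) : Prop :=
  u ∈ N.verts ∧ (∀ a ∈ l, N.okArc a) ∧
    List.Chain' (fun a b : Arc V => a.2.1 = b.1) l ∧
    ∀ a ∈ l.head?, (a : Arc V).1 = u

/-- The end vertex of the walk `l` starting at `u`. -/
def endOf (u : V) (l : List (Arc V)) : V := (l.getLastD (u, u, 0)).2.1

/-- The list of vertices visited by a walk `l` starting at `u`. -/
def walkVerts (u : V) (l : List (Arc V)) : List V := u :: l.map (fun a => a.2.1)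

/-- The inner (non-endpoint) vertices of a walk `l` starting at `u`. -/
def innerVerts (u : V) (l : List (Arc V)) : List V := ((walkVerts u l).dropLast).drop 1

/-- `w` is *below* `u` (there is a directed path from `u` to `w`; every
vertex is below itself).  Equivalently, `u` is an *ancestor* of `w`. -/
def Reaches (N : Net V) (u w : V) : Prop := ∃ l, N.WalkFrom u l ∧ endOf u l = w

/-- The indegree of a vertex (counting parallel arcs). -/
noncomputable def inDeg (N : Net V) (v : V) : ℕ := ∑ᶠ u, N.arcs u v

/-- The outdegree of a vertex (counting parallel arcs). -/
noncomputable def outDeg (N : Net V) (v : V) : ℕ := ∑ᶠ u, N.arcs v u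

/-- A leaf is a vertex of outdegree zero. -/
def IsLeaf (N : Net V) (v : V) : Prop := v ∈ N.verts ∧ N.outDeg v = 0

/-- An interior vertex is a non-leaf vertex. -/
def IsInterior (N : Net V) (v : V) : Prop := v ∈ N.verts ∧ N.outDeg v ≠ 0

/-- A tree vertex is a vertex of indegree at most one. -/
def IsTreeVert (N : Net V) (v : V) : Prop := v ∈ N.verts ∧ N.inDeg v ≤ 1

/-- A hybrid vertex is a vertex of indegree at least two. -/
def IsHybrid (N : Net V) (v : V) : Prop := v ∈ N.verts ∧ 2 ≤ N.inDeg v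

/-- The one-step arc relation. -/
def ArcRel (N : Net V) (u v : V) : Prop := 0 < N.arcs u v

/-- `N` contains no directed cycle. -/
def Acyclic (N : Net V) : Prop := ∀ v, ¬ Relation.TransGen N.ArcRel v v

/-- A rooted connected pseudoDAG: a finite rooted directed (multi)graph with
no directed cycles in which every vertex is reachable from the root. -/
structure IsPseudoDAG (N : Net V) : Prop where
  finite : N.verts.Finite
  rootMem : N.root ∈ N.verts
  arcMem : ∀ u v, N.arcs u v ≠ 0 → u ∈ N.verts ∧ v ∈ N.verts
  acyclic : N.Acyclic
  connected : ∀ v ∈ N.verts, N.Reaches N.root v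

/-- An `X`-network: a rooted connected pseudoDAG whose leaf set is `X`, where
the root has indegree zero, every non-leaf tree vertex has outdegree two,
every hybrid vertex has outdegree one, and every leaf has total degree one. -/
structure IsXNetwork (N : Net V) (X : Set V) extends IsPseudoDAG N : Prop where
  rootInDeg : N.inDeg N.root = 0
  leafSet : ∀ v, N.IsLeaf v ↔ v ∈ X
  treeOutDeg : ∀ v ∈ N.verts, N.inDeg v ≤ 1 → N.outDeg v ≠ 0 → N.outDeg v = 2
  hybridOutDeg : ∀ v ∈ N.verts, 2 ≤ N.inDeg v → N.outDeg v = 1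
  leafInDeg : ∀ v ∈ X, N.inDeg v = 1

/-- No parallel arcs. -/
def NoParallel (N : Net V) : Prop := ∀ u v, N.arcs u v ≤ 1

/-- A phylogenetic network on `X`: an `X`-network without parallel arcs. -/
structure IsPhyloNetwork (N : Net V) (X : Set V) extends IsXNetwork N X : Prop where
  noParallel : N.NoParallel

/-- A phylogenetic tree on `X`: a phylogenetic network with no hybrid vertices. -/
structure IsPhyloTree (N : Net V) (X : Set V) extends IsPhyloNetwork N X : Prop where
  noHybrid : ∀ v, ¬ N.IsHybrid v

/-- A vertex with indegree one and outdegree one (to be suppressed). -/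
def Suppressible (N : Net V) (v : V) : Prop :=
  v ∈ N.verts ∧ N.inDeg v = 1 ∧ N.outDeg v = 1

/-- The graph obtained from `N` by suppressing all vertices of indegree one and
outdegree one: kept vertices are the non-suppressible ones, and the number of
arcs from `u` to `w` is the number of directed paths from `u` to `w` in `N`
all of whose inner vertices are suppressible. -/
noncomputable def suppr (N : Net V) : Net V where
  verts := {v ∈ N.verts | ¬ N.Suppressible v}
  arcs := fun u w =>
    if u ∈ N.verts ∧ ¬ N.Suppressible u ∧ w ∈ N.verts ∧ ¬ N.Suppressible w then
      Set.ncard {l : List (Arc V) | N.WalkFrom u l ∧ l ≠ [] ∧ endOf u l = w ∧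
        ∀ x ∈ innerVerts u l, N.Suppressible x}
    else 0
  root := N.root

/-- `g` realizes an isomorphism of rooted multigraphs from `N` to `N'`. -/
def NetIsoVia {W : Type w} (N : Net V) (N' : Net W) (g : V → W) : Prop :=
  Set.BijOn g N.verts N'.verts ∧
    (∀ u ∈ N.verts, ∀ v ∈ N.verts, N'.arcs (g u) (g v) = N.arcs u v) ∧
    g N.root = N'.root

/-- `w` is a vertex-stable ancestor of the leaf `x`: `w` is an interior vertex
lying on every directed path from the root to `x`. -/
def IsVSAncestor (N : Net V) (w x : V) : Prop :=
  N.IsInterior w ∧ N.IsLeaf x ∧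
    ∀ l, N.WalkFrom N.root l → endOf N.root l = x → w ∈ walkVerts N.root l

/-- `N` is tree-child: every interior vertex has a child that is a tree vertex. -/
def TreeChild (N : Net V) : Prop :=
  ∀ v, N.IsInterior v → ∃ u, 0 < N.arcs v u ∧ N.IsTreeVert u

/-- `N` is compressed: no arc has both its tail and its head hybrid. -/
def Compressed (N : Net V) : Prop :=
  ∀ u v, 0 < N.arcs u v → ¬(N.IsHybrid u ∧ N.IsHybrid v)

/-- `N` is reticulation-visible: every hybrid vertex is a vertex-stable
ancestor of some leaf. -/
def RetVisible (N : Net V) (X : Set V) : Prop :=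
  ∀ h, N.IsHybrid h → ∃ x ∈ X, N.IsVSAncestor h x

/-- The set of arc tokens used by a walk. -/
def arcsOf (l : List (Arc V)) : Set (Arc V) := {a | a ∈ l}

/-- The union of the directed paths `p₁` and `p₂` contains a subgraph that is
a reticulation cycle of `N`, i.e. the union of two arc-disjoint non-trivial
directed paths of `N` with the same start vertex and the same end vertex. -/
def ContainsRetCycle (N : Net V) (p₁ p₂ : List (Arc V)) : Prop :=
  ∃ (q₁ q₂ : List (Arc V)) (s e : V),
    N.WalkFrom s q₁ ∧ N.WalkFrom s q₂ ∧ q₁ ≠ [] ∧ q₂ ≠ [] ∧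
    endOf s q₁ = e ∧ endOf s q₂ = e ∧
    Disjoint (arcsOf q₁) (arcsOf q₂) ∧
    arcsOf q₁ ∪ arcsOf q₂ ⊆ arcsOf p₁ ∪ arcsOf p₂

/-- The set of vertices having a descendant in `Y`. -/
def keepSet (N : Net V) (Y : Set V) : Set V := {v ∈ N.verts | ∃ y ∈ Y, N.Reaches v y}

/-- The result of the leaf-removing operations applied to all leaves outside
`Y`: restrict to the vertices having a descendant in `Y` and suppress all
resulting vertices of indegree one and outdegree one. -/
noncomputable def restrictNet (N : Net V) (Y : Set V) : Net V :=
  Net.suppr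
    { verts := N.keepSet Y
      arcs := fun u w => if u ∈ N.keepSet Y ∧ w ∈ N.keepSet Y then N.arcs u w else 0
      root := N.root }

end Net

/-- A labelled rooted directed multigraph: the data of a MUL-tree on the
label set: `lab x` is the set of leaves labelled `x`. -/
structure LNet (V : Type u) (L : Type v) extends Net V where
  lab : L → Set V

namespace LNet

variable {V : Type u} {L : Type v}

/-- `M` is a MUL-tree on `X`: a rooted tree whose root has indegree `0`, with
no vertex of indegree one and outdegree one, in which every leaf carries
exactly one label from `X` and every label of `X` occurs. -/
structure IsMulTree (M : LNet V L) (X : Set L) : Prop where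
  pseudo : M.toNet.IsPseudoDAG
  rootInDeg : M.toNet.inDeg M.root = 0
  inDegOne : ∀ v ∈ M.verts, v ≠ M.root → M.toNet.inDeg v = 1
  noSupp : ∀ v, ¬ M.toNet.Suppressible v
  labLeaf : ∀ x ∈ X, ∀ l ∈ M.lab x, M.toNet.IsLeaf l
  labNonempty : ∀ x ∈ X, (M.lab x).Nonempty
  labCover : ∀ l, M.toNet.IsLeaf l → ∃! x, x ∈ X ∧ l ∈ M.lab x
  labOff : ∀ x, x ∉ X → M.lab x = ∅

/-- The set of vertices below `v`. -/
def belowSet (M : LNet V L) (v : V) : Set V := {w | M.toNet.Reaches v w}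

/-- The subMUL-tree `M_v` of `M` rooted at the vertex `v` (delete the incoming
arc of `v` and restrict the labelling). -/
noncomputable def subAt (M : LNet V L) (v : V) : LNet V L where
  verts := M.belowSet v
  arcs := fun u w => if u ∈ M.belowSet v ∧ w ∈ M.belowSet v then M.arcs u w else 0
  root := v
  lab := fun x => M.lab x ∩ M.belowSet v

/-- `η` realizes an isomorphism of MUL-trees (same label type). -/
def MulIsoVia {V' : Type w} (M : LNet V L) (M' : LNet V' L) (η : V → V') : Prop :=
  Set.BijOn η M.verts M'.verts ∧
    (∀ u ∈ M.verts, ∀ w ∈ M.verts, M'.arcs (η u) (η w) = M.arcs u w) ∧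
    η M.root = M'.root ∧
    ∀ x : L, η '' (M.lab x ∩ M.verts) = M'.lab x ∩ M'.verts

/-- Two labelled trees (on the same label type) are isomorphic. -/
def MulIso {V' : Type w} (M : LNet V L) (M' : LNet V' L) : Prop := ∃ η, MulIsoVia M M' η

/-- `η` realizes an isomorphism of MUL-trees on `X` modulo the label
translation `e`. -/
def MulIsoRelVia {V' : Type w} {L' : Type*} (M : LNet V L) (X : Set L)
    (M' : LNet V' L') (e : L → L') (η : V → V') : Prop :=
  Set.BijOn η M.verts M'.verts ∧
    (∀ u ∈ M.verts, ∀ w ∈ M.verts, M'.arcs (η u) (η w) = M.arcs u w) ∧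
    η M.root = M'.root ∧
    ∀ x ∈ X, η '' (M.lab x ∩ M.verts) = M'.lab (e x) ∩ M'.verts

/-- The equivalence relation `∼`: `u ∼ w` iff `u = w` or the subMUL-trees
`M_u` and `M_w` are isomorphic. -/
def Sim (M : LNet V L) (u w : V) : Prop := u = w ∨ MulIso (M.subAt u) (M.subAt w)

/-- The `∼`-equivalence class of `w`; the map `eqClass M : V(M) → V(M)/∼`
plays the role of the projection `p_M` onto the quotient. -/
def eqClass (M : LNet V L) (w : V) : Set V := {u ∈ M.verts | M.Sim u w}

/-- The quotient `V(M)/∼`, realized as the set of `∼`-equivalence classes. -/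
def classSet (M : LNet V L) : Set (Set V) := M.eqClass '' M.verts

/-- `c` is a `∼`-equivalence class of `M`. -/
def IsClassOf (M : LNet V L) (c : Set V) : Prop := ∃ w ∈ M.verts, c = M.eqClass w

/-- The class `c` gets a hybrid vertex above it in the fold-up of `M`:
some (equivalently, any) member of `c` has its parent in a strictly smaller
`∼`-class. -/
def ClassHyb (M : LNet V L) (c : Set V) : Prop :=
  ∃ w ∈ M.verts, c = M.eqClass w ∧ ∃ u, 0 < M.arcs u w ∧ (M.eqClass u).ncard < c.ncard

/-- `d` is the class of a parent of a member of `c`. -/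
def IsParentClassOf (M : LNet V L) (d c : Set V) : Prop :=
  ∃ u w, 0 < M.arcs u w ∧ d = M.eqClass u ∧ c = M.eqClass w

/-- The number of children inside `c` of a member of `d`. -/
noncomputable def childMult (M : LNet V L) (d c : Set V) : ℕ :=
  sSup {n : ℕ | ∃ u ∈ d, n = ∑ᶠ w ∈ c, M.arcs u w}

/-- The fold-up `F(M)` of the MUL-tree `M`: the `X`-network obtained by
repeatedly identifying all maximal inextendible subMUL-trees, subdividing
the incoming arcs of their roots and identifying the subdivision vertices.
Concretely, its tree vertices are the `∼`-classes of `M`, there is a hybrid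
vertex above each class whose members have parents in a strictly smaller
class, and arcs are induced by the arcs of `M`. -/
noncomputable def foldUp (M : LNet V L) : Net (Set V ⊕ Set V) where
  verts := (Sum.inl '' {c | M.IsClassOf c}) ∪
    (Sum.inr '' {c | M.IsClassOf c ∧ M.ClassHyb c})
  arcs := fun a b =>
    match a, b with
    | Sum.inl d, Sum.inl c =>
        if M.IsClassOf d ∧ M.IsClassOf c ∧ ¬ M.ClassHyb c ∧ M.IsParentClassOf d c
        then 1 else 0
    | Sum.inl d, Sum.inr c =>
        if M.IsClassOf d ∧ M.IsClassOf c ∧ M.ClassHyb c ∧ M.IsParentClassOf d c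
        then M.childMult d c else 0
    | Sum.inr c, Sum.inl c' =>
        if c' = c ∧ M.IsClassOf c ∧ M.ClassHyb c then 1 else 0
    | Sum.inr _, Sum.inr _ => 0
  root := Sum.inl (M.eqClass M.root)

/-- The `∼`-class of the leaves labelled `x`. -/
def labClass (M : LNet V L) (x : L) : Set V := {w ∈ M.verts | ∃ l ∈ M.lab x, M.Sim w l}

/-- The leaf set of the fold-up of `M`, identified with `X`. -/
def foldX (M : LNet V L) (X : Set L) : Set (Set V ⊕ Set V) :=
  (fun x => Sum.inl (M.labClass x)) '' X

/-- A MUL-tree is sound if its fold-up is a phylogenetic network. -/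
def IsSound (M : LNet V L) (X : Set L) : Prop :=
  M.IsMulTree X ∧ Net.IsPhyloNetwork M.foldUp (M.foldX X)

/-- An `X`-set of `M`: a set of leaves containing exactly one leaf labelled
`x` for every `x ∈ X`. -/
def IsXSet (M : LNet V L) (X : Set L) (C : Set V) : Prop :=
  (∀ l ∈ C, M.toNet.IsLeaf l) ∧ ∀ x ∈ X, ∃! l, l ∈ C ∧ l ∈ M.lab x

/-- `r` is the last common ancestor of the elements of `C`. -/
def IsLca (M : LNet V L) (r : V) (C : Set V) : Prop :=
  r ∈ M.verts ∧ (∀ c ∈ C, M.toNet.Reaches r c) ∧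
    ∀ r' ∈ M.verts, (∀ c ∈ C, M.toNet.Reaches r' c) → M.toNet.Reaches r' r

/-- The last common ancestor `r_C` of the elements of `C`. -/
noncomputable def lcaOf [Nonempty V] (M : LNet V L) (C : Set V) : V :=
  Classical.epsilon fun r => M.IsLca r C

/-- The vertex set of `M_C⁺`: all vertices on a directed path from
`lca(C)` to a leaf in `C`. -/
def subPlusVerts [Nonempty V] (M : LNet V L) (C : Set V) : Set V :=
  {v | M.toNet.Reaches (M.lcaOf C) v ∧ ∃ c ∈ C, M.toNet.Reaches v c}

/-- The tree `M_C⁺` spanned by the leaves in `C`; the canonical injection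
`ξ_C⁺ : V(M_C⁺) → V(M)` is the set-inclusion `subPlusVerts M C ⊆ V`, so that
the map `ξ̄_C⁺ = p_M ∘ ξ_C⁺` is realized by `eqClass M` restricted to
`subPlusVerts M C`. -/
noncomputable def subPlus [Nonempty V] (M : LNet V L) (C : Set V) : Net V where
  verts := M.subPlusVerts C
  arcs := fun u w => if u ∈ M.subPlusVerts C ∧ w ∈ M.subPlusVerts C then M.arcs u w else 0
  root := M.lcaOf C

/-- The phylogenetic tree `M_C` induced by the `X`-set `C`: suppress all
vertices of indegree one and outdegree one in `M_C⁺`. -/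
noncomputable def mC [Nonempty V] (M : LNet V L) (C : Set V) : Net V := (M.subPlus C).suppr

/-- The set `V(M)^C`: the vertex `r_C` together with all vertices `v` such
that no vertex below `v` is `∼`-equivalent to `r_C`. -/
def vmc [Nonempty V] (M : LNet V L) (C : Set V) : Set V :=
  insert (M.lcaOf C) {v ∈ M.verts | ∀ u, M.toNet.Reaches v u → ¬ M.Sim u (M.lcaOf C)}

/-- Vertices of `M` having a descendant leaf labelled by an element of `Y`. -/
def keepSet (M : LNet V L) (Y : Set L) : Set V :=
  {v ∈ M.verts | ∃ w, M.toNet.Reaches v w ∧ ∃ y ∈ Y, w ∈ M.lab y}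

/-- The MUL-tree `M_Y` obtained from `M` by the leaf-removing operation:
remove all leaves labelled outside `Y` (together with everything having no
leaf labelled in `Y` below it) and suppress all resulting vertices of
indegree one and outdegree one. -/
noncomputable def restrictMul (M : LNet V L) (Y : Set L) : LNet V L where
  toNet := Net.suppr
    { verts := M.keepSet Y
      arcs := fun u w => if u ∈ M.keepSet Y ∧ w ∈ M.keepSet Y then M.arcs u w else 0
      root := M.root }
  lab := fun y => if y ∈ Y then M.lab y else ∅

end LNet

namespace Net

variable {V : Type u}

/-- The vertex set of the un-fold `U(N)` of `N`: the set `π⁻(N)` of directed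
paths of `N` starting at the root and ending in a tree vertex.  (The
bijection `Ψ_N : π⁻(N) → V(U(N))` is thereby realized as the identity.) -/
def unfoldVerts (N : Net V) : Set (List (Arc V)) :=
  {p | N.WalkFrom N.root p ∧ N.IsTreeVert (endOf N.root p)}

/-- The un-fold `U(N)` of `N`, a MUL-tree on `X`: vertices are the directed
paths from the root ending in tree vertices, arcs correspond to extending
such a path by a single arc followed by a (possibly empty) run of hybrid
vertices, and the leaves labelled `x ∈ X` are the paths ending in `x`. -/
noncomputable def unfoldNet (N : Net V) (X : Set V) : LNet (List (Arc V)) V where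
  verts := unfoldVerts N
  arcs := fun p q =>
    if p ∈ unfoldVerts N ∧ q ∈ unfoldVerts N ∧
        ∃ r, r ≠ [] ∧ q = p ++ r ∧ ∀ a ∈ r.dropLast, N.IsHybrid (a : Arc V).2.1
    then 1 else 0
  root := []
  lab := fun x => if x ∈ X then {p ∈ unfoldVerts N | endOf N.root p = x} else ∅

end Net

/-- `N` is a stable phylogenetic network on `X`: `N` is a phylogenetic
network isomorphic to the fold-up of its un-fold, via an isomorphism fixing
`X` pointwise (i.e. sending each leaf `x` to the leaf of `F(U(N))`
corresponding to `x`). -/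
def IsStable {V : Type u} (N : Net V) (X : Set V) : Prop :=
  Net.IsPhyloNetwork N X ∧
    ∃ g, Net.NetIsoVia N (Net.unfoldNet N X).foldUp g ∧
      ∀ x ∈ X, g x = Sum.inl ((Net.unfoldNet N X).labClass x)

/-- `T` is endorsed by the MUL-tree `M` via the `X`-set `C`, the isomorphism
`T ≅ M_C` being realized by `σ` (which sends each `x ∈ X` to the unique leaf
of `C` labelled `x`). -/
def EndorsedVia {V : Type u} {W : Type w} [Nonempty W] (T : Net V) (X : Set V)
    (M : LNet W V) (C : Set W) (σ : V → W) : Prop :=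
  M.IsXSet X C ∧ Net.NetIsoVia T (M.mC C) σ ∧ ∀ x ∈ X, σ x ∈ C ∧ σ x ∈ M.lab x

/-- `T` is endorsed by the MUL-tree `M` via the `X`-set `C`. -/
def Endorsed {V : Type u} {W : Type w} [Nonempty W] (T : Net V) (X : Set V)
    (M : LNet W V) (C : Set W) : Prop :=
  ∃ σ, EndorsedVia T X M C σ

/-- `N'` is a subgraph of `N` with leaf set `X` which is (an isomorphic copy,
via the identity on `X`, of) a subdivision of `T`: suppressing all vertices
of indegree one and outdegree one in `N'` yields a tree isomorphic to `T`
via an isomorphism `g` fixing `X` pointwise. -/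
def IsDisplayWitness {V : Type u} (N : Net V) (X : Set V) (T : Net V)
    (N' : Net V) (g : V → V) : Prop :=
  N'.verts ⊆ N.verts ∧ (∀ u v, N'.arcs u v ≤ N.arcs u v) ∧
    N'.root ∈ N'.verts ∧ (∀ v ∈ N'.verts, N'.Reaches N'.root v) ∧
    (∀ v, N'.IsLeaf v ↔ v ∈ X) ∧
    Net.NetIsoVia T N'.suppr g ∧ ∀ x ∈ X, g x = x

/-- The phylogenetic tree `T` is displayed by `N`. -/
def Displays {V : Type u} (N : Net V) (X : Set V) (T : Net V) : Prop :=
  ∃ N' g, IsDisplayWitness N X T N' g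

/-- The phylogenetic tree `T` is strongly displayed by `N`: it is displayed
via a subdivision whose root is the root of `N`. -/
def StronglyDisplays {V : Type u} (N : Net V) (X : Set V) (T : Net V) : Prop :=
  ∃ N' g, IsDisplayWitness N X T N' g ∧ N'.root = N.root

/-- `G` is a rooted tree. -/
structure IsRootedTree {V : Type u} (G : Net V) : Prop where
  pseudo : G.IsPseudoDAG
  rootInDeg : G.inDeg G.root = 0
  inDegOne : ∀ v ∈ G.verts, v ≠ G.root → G.inDeg v = 1

/-- `T'` is a subdivision of `T` (with the identity on `X`): `T'` is a rooted
tree which, after suppressing all vertices of indegree one and outdegree one,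
is isomorphic to `T` via an isomorphism fixing `X` pointwise. -/
def IsSubdivisionOf {V : Type u} (T' T : Net V) (X : Set V) : Prop :=
  IsRootedTree T' ∧ ∃ g, Net.NetIsoVia T T'.suppr g ∧ ∀ x ∈ X, g x = x

/-- `T` is a base tree for `N`: `N` can be obtained from `T` by subdividing
some arcs of `T`, adding arcs between the subdivision vertices without
creating parallel arcs or directed cycles, and suppressing all subdivision
vertices still of indegree one and outdegree one. -/
def IsBaseTreeFor {V : Type u} (T : Net V) (X : Set V) (N : Net V) : Prop :=
  ∃ T' G : Net V,
    IsSubdivisionOf T' T X ∧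
    G.verts = T'.verts ∧ G.root = T'.root ∧
    (∀ u v, T'.arcs u v ≤ G.arcs u v) ∧
    (∀ u v, T'.arcs u v ≠ G.arcs u v → T'.Suppressible u ∧ T'.Suppressible v) ∧
    G.NoParallel ∧ G.Acyclic ∧
    ∃ h, Net.NetIsoVia G.suppr N h ∧ ∀ x ∈ X, h x = x

end Phylo

/-!
If two root paths of a network end at the same vertex, translating suffixes identifies the parts
of the un-fold below them; pulled back along `θ`, equal end vertices give `u ∼ v`. Conversely,
the end vertices are tree vertices of `F(M)`, and these are indexed by `∼`-classes. So
`w ↦ end(θ w)` refines `∼` while taking at most as many values as there are classes: the two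
partitions of `V(M)` coincide, and `u ∼ v` forces equal end vertices.
-/

theorem Set.apply_eq_of_apply_eq_of_ncard_image_le {α β γ : Type*} {s : Set α} {f : α → β}
    {g : α → γ} (hfin : (f '' s).Finite) (hfg : ∀ a ∈ s, ∀ b ∈ s, f a = f b → g a = g b)
    (hcard : (f '' s).ncard ≤ (g '' s).ncard) {a b : α} (ha : a ∈ s) (hb : b ∈ s)
    (hab : g a = g b) : f a = f b := by
  set P := (fun a => (f a, g a)) '' s
  have hfst : Set.InjOn Prod.fst P := by
    rintro _ ⟨a, ha, rfl⟩ _ ⟨b, hb, rfl⟩ (h : f a = f b)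
    simp only [h, hfg a ha b hb h]
  have hPf : Prod.fst '' P = f '' s := Set.image_image ..
  have hPg : Prod.snd '' P = g '' s := Set.image_image ..
  have hPfin : P.Finite := Set.Finite.of_finite_image (hPf ▸ hfin) hfst
  have hsnd : Set.InjOn Prod.snd P := Set.injOn_of_ncard_image_eq
    (le_antisymm (Set.ncard_image_le hPfin) (by rw [hPg, ← hfst.ncard_image, hPf]; exact hcard))
    hPfin
  exact congrArg Prod.fst (hsnd ⟨a, ha, rfl⟩ ⟨b, hb, rfl⟩ hab)

lemma Set.BijOn.image_inter_eq {α β : Type*} {g : α → β} {S A : Set α} {T B : Set β}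
    (h : Set.BijOn g S T) (hAB : ∀ z ∈ S, z ∈ A ↔ g z ∈ B) : g '' (A ∩ S) = B ∩ T := by
  have hS : A ∩ S = S ∩ g ⁻¹' B := by
    ext z; exact ⟨fun hz => ⟨hz.2, (hAB z hz.2).1 hz.1⟩, fun hz => ⟨(hAB z hz.1).2 hz.2, hz.1⟩⟩
  rw [hS, Set.image_inter_preimage, h.image_eq, Set.inter_comm]

namespace Phylo

namespace Net

variable {V : Type u} {W : Type w}

def Step (N : Net V) (a b : V) : Prop := a ∈ N.verts ∧ b ∈ N.verts ∧ N.ArcRel a b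

lemma endOf_cons (u : V) (a : Arc V) (l : List (Arc V)) :
    endOf u (a :: l) = endOf a.2.1 l := by
  cases l with
  | nil => rfl
  | cons b l => simp only [endOf, List.getLastD_cons]

lemma endOf_append (u : V) (l₁ l₂ : List (Arc V)) :
    endOf u (l₁ ++ l₂) = endOf (endOf u l₁) l₂ := by
  induction l₁ generalizing u with
  | nil => rfl
  | cons a l ih => rw [List.cons_append, endOf_cons, endOf_cons, ih]

lemma walkFrom_nil (N : Net V) (u : V) : N.WalkFrom u [] ↔ u ∈ N.verts :=
  ⟨And.left, fun hu => ⟨hu, nofun, .nil, nofun⟩⟩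

lemma walkFrom_cons (N : Net V) (u : V) (a : Arc V) (l : List (Arc V)) :
    N.WalkFrom u (a :: l) ↔ a.1 = u ∧ N.okArc a ∧ N.WalkFrom a.2.1 l := by
  constructor
  · rintro ⟨-, hok, hch, hhd⟩
    obtain ⟨ha, hoks⟩ := List.forall_mem_cons.1 hok
    obtain ⟨hhd', hch⟩ := List.isChain_cons.1 hch
    exact ⟨hhd a rfl, ha, ha.2.1, hoks, hch, fun b hb => (hhd' b hb).symm⟩
  · rintro ⟨rfl, ha, -, hoks, hch, hhd⟩
    exact ⟨ha.1, List.forall_mem_cons.2 ⟨ha, hoks⟩,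
      List.isChain_cons.2 ⟨fun b hb => (hhd b hb).symm, hch⟩, fun b hb => by cases hb; rfl⟩

lemma walkFrom_append (N : Net V) (u : V) (l₁ l₂ : List (Arc V)) :
    N.WalkFrom u (l₁ ++ l₂) ↔ N.WalkFrom u l₁ ∧ N.WalkFrom (endOf u l₁) l₂ := by
  induction l₁ generalizing u with
  | nil => exact ⟨fun h => ⟨(walkFrom_nil N u).2 h.1, h⟩, And.right⟩
  | cons a l ih =>
      rw [List.cons_append, walkFrom_cons, walkFrom_cons, endOf_cons, ih]
      tauto

lemma reaches_iff {N : Net V} {u w : V} :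
    N.Reaches u w ↔ u ∈ N.verts ∧ Relation.ReflTransGen N.Step u w := by
  constructor
  · rintro ⟨l, hl, rfl⟩
    induction l generalizing u with
    | nil => exact ⟨hl.1, .refl⟩
    | cons a l ih =>
        obtain ⟨rfl, hok, hl⟩ := (walkFrom_cons N _ a l).1 hl
        rw [endOf_cons]
        exact ⟨hok.1, .head ⟨hok.1, hok.2.1, Nat.zero_lt_of_lt hok.2.2⟩ (ih hl).2⟩
  · rintro ⟨hu, h⟩
    induction h using Relation.ReflTransGen.head_induction_on with
    | refl => exact ⟨[], (walkFrom_nil N _).2 hu, rfl⟩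
    | head hstep _ ih =>
        obtain ⟨l, hl, rfl⟩ := ih hstep.2.1
        exact ⟨_ :: l, (walkFrom_cons N _ (_, _, 0) l).2 ⟨rfl, ⟨hstep.1, hstep.2.1, hstep.2.2⟩, hl⟩,
          endOf_cons _ _ _⟩

lemma reaches_refl {N : Net V} {u : V} (hu : u ∈ N.verts) : N.Reaches u u :=
  ⟨[], (walkFrom_nil N u).2 hu, rfl⟩

lemma Reaches.mem_verts {N : Net V} {u w : V} (h : N.Reaches u w) : w ∈ N.verts := by
  obtain ⟨hu, h⟩ := reaches_iff.1 h
  cases h.cases_tail with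
  | inl h => exact h ▸ hu
  | inr h => obtain ⟨_, -, hstep⟩ := h; exact hstep.2.1

def GraphIsoVia (N : Net V) (N' : Net W) (g : V → W) : Prop :=
  Set.BijOn g N.verts N'.verts ∧ ∀ u ∈ N.verts, ∀ v ∈ N.verts, N'.arcs (g u) (g v) = N.arcs u v

namespace GraphIsoVia

variable {N : Net V} {N' : Net W} {g : V → W}

lemma step (h : N.GraphIsoVia N' g) {a b : V} (hab : N.Step a b) : N'.Step (g a) (g b) :=
  ⟨h.1.mapsTo hab.1, h.1.mapsTo hab.2.1, (h.2 _ hab.1 _ hab.2.1 ▸ hab.2.2 : 0 < _)⟩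

lemma reaches (h : N.GraphIsoVia N' g) {u w : V} (huw : N.Reaches u w) :
    N'.Reaches (g u) (g w) := by
  obtain ⟨hu, huw⟩ := reaches_iff.1 huw
  exact reaches_iff.2 ⟨h.1.mapsTo hu, huw.lift g fun _ _ => h.step⟩

lemma invFunOn [Nonempty V] (h : N.GraphIsoVia N' g) :
    N'.GraphIsoVia N (Function.invFunOn g N.verts) := by
  have hinv := h.1.invOn_invFunOn
  refine ⟨h.1.symm hinv.symm, fun a ha b hb => ?_⟩
  have hmaps := (h.1.symm hinv.symm).mapsTo
  rw [← h.2 _ (hmaps ha) _ (hmaps hb), hinv.2 ha, hinv.2 hb]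

lemma image_setOf_reaches (h : N.GraphIsoVia N' g) {u : V} (hu : u ∈ N.verts) :
    g '' {w | N.Reaches u w} = {w | N'.Reaches (g u) w} := by
  have : Nonempty V := ⟨u⟩
  refine Set.Subset.antisymm (Set.image_subset_iff.2 fun w => h.reaches) fun b hb => ?_
  have hinv := h.1.invOn_invFunOn
  refine ⟨Function.invFunOn g N.verts b, ?_, hinv.2 hb.mem_verts⟩
  simpa only [Set.mem_ofPred_eq, hinv.1 hu] using h.invFunOn.reaches hb

end GraphIsoVia

end Net

namespace LNet

variable {V : Type u} {L : Type v} {W : Type w}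

lemma subAt_arcs_of_mem (M : LNet V L) {v a b : V} (ha : a ∈ M.belowSet v)
    (hb : b ∈ M.belowSet v) : (M.subAt v).arcs a b = M.arcs a b :=
  if_pos ⟨ha, hb⟩

namespace MulIsoVia

variable {A : LNet V L} {B : LNet W L} {θ : V → W}

lemma graphIsoVia (h : MulIsoVia A B θ) : A.GraphIsoVia B.toNet θ := ⟨h.1, h.2.1⟩

lemma mem_lab_iff (h : MulIsoVia A B θ) {z : V} (hz : z ∈ A.verts) (x : L) :
    z ∈ A.lab x ↔ θ z ∈ B.lab x := by
  have himage := h.2.2.2 x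
  constructor
  · intro hx
    have : θ z ∈ θ '' (A.lab x ∩ A.verts) := ⟨z, ⟨hx, hz⟩, rfl⟩
    rw [himage] at this
    exact this.1
  · intro hx
    have : θ z ∈ B.lab x ∩ B.verts := ⟨hx, h.1.mapsTo hz⟩
    rw [← himage] at this
    obtain ⟨z', ⟨hx', hz'⟩, he⟩ := this
    rwa [← h.1.injOn hz' hz he]

lemma symm [Nonempty V] (h : MulIsoVia A B θ) (hroot : A.root ∈ A.verts) :
    MulIsoVia B A (Function.invFunOn θ A.verts) := by
  have hinv := h.1.invOn_invFunOn
  have hσ := h.graphIsoVia.invFunOn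
  refine ⟨hσ.1, hσ.2, by rw [← h.2.2.1, hinv.1 hroot], fun x => hσ.1.image_inter_eq fun b hb => ?_⟩
  rw [h.mem_lab_iff (hσ.1.mapsTo hb), hinv.2 hb]

lemma subAt (h : MulIsoVia A B θ) {u : V} (hu : u ∈ A.verts) :
    MulIsoVia (A.subAt u) (B.subAt (θ u)) θ := by
  have himage : θ '' A.belowSet u = B.belowSet (θ u) := h.graphIsoVia.image_setOf_reaches hu
  have hbij : Set.BijOn θ (A.belowSet u) (B.belowSet (θ u)) := by
    rw [← himage]; exact (h.1.injOn.mono fun _ => Net.Reaches.mem_verts).bijOn_image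
  refine ⟨hbij, fun a ha b hb => ?_, rfl, fun x => ?_⟩
  · rw [subAt_arcs_of_mem _ (hbij.mapsTo ha) (hbij.mapsTo hb), subAt_arcs_of_mem _ ha hb,
      h.2.1 _ ha.mem_verts _ hb.mem_verts]
  · refine hbij.image_inter_eq fun z hz => ?_
    exact and_congr (h.mem_lab_iff hz.mem_verts x) (iff_of_true hz (hbij.mapsTo hz))

lemma mulIso (h : MulIsoVia A B θ) : MulIso A B := ⟨θ, h⟩

end MulIsoVia

lemma MulIso.trans {U : Type*} {A : LNet V L} {B : LNet W L} {C : LNet U L}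
    (h₁ : MulIso A B) (h₂ : MulIso B C) : MulIso A C := by
  obtain ⟨η, hηb, hηa, hηr, hηl⟩ := h₁
  obtain ⟨τ, hτb, hτa, hτr, hτl⟩ := h₂
  refine ⟨τ ∘ η, hτb.comp hηb, fun a ha b hb => ?_, by simp [hηr, hτr], fun x => ?_⟩
  · rw [Function.comp_apply, Function.comp_apply, hτa _ (hηb.mapsTo ha) _ (hηb.mapsTo hb),
      hηa _ ha _ hb]
  · rw [Set.image_comp, hηl x, hτl x]

lemma sim_symm {M : LNet V L} {u w : V} (hu : u ∈ M.verts) (h : M.Sim u w) : M.Sim w u := by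
  rcases h with rfl | ⟨η, hη⟩
  · exact Or.inl rfl
  · have : Nonempty V := ⟨u⟩
    exact Or.inr (hη.symm (Net.reaches_refl hu)).mulIso

lemma sim_trans {M : LNet V L} {u w z : V} (h₁ : M.Sim u w) (h₂ : M.Sim w z) : M.Sim u z := by
  rcases h₁ with rfl | h₁
  · exact h₂
  · rcases h₂ with rfl | h₂
    · exact Or.inr h₁
    · exact Or.inr (h₁.trans h₂)

lemma eqClass_eq_of_sim {M : LNet V L} {u w : V} (hu : u ∈ M.verts) (h : M.Sim u w) :
    M.eqClass u = M.eqClass w :=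
  Set.ext fun _ => and_congr_right fun _ =>
    ⟨fun ha => sim_trans ha h, fun ha => sim_trans ha (sim_symm hu h)⟩

def comapLab {L' : Type*} (B : LNet W L') (X : Set L) (e : L → L') : LNet W L :=
  { B.toNet with lab := fun x => {w ∈ B.lab (e x) | x ∈ X} }

lemma MulIsoRelVia.mulIsoVia_comapLab {L' : Type*} {A : LNet V L} {X : Set L} {B : LNet W L'}
    {e : L → L'} {θ : V → W} (h : MulIsoRelVia A X B e θ) (hoff : ∀ x ∉ X, A.lab x = ∅) :
    MulIsoVia A (B.comapLab X e) θ := by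
  refine ⟨h.1, h.2.1, h.2.2.1, fun x => ?_⟩
  by_cases hx : x ∈ X
  · simpa [comapLab, hx] using h.2.2.2 x hx
  · simp [comapLab, hx, hoff x hx]

lemma MulIso.comapLab_subAt {L' : Type*} {B : LNet W L'} {X : Set L} {e : L → L'} {p q : W}
    (h : MulIso (B.subAt p) (B.subAt q)) :
    MulIso ((B.comapLab X e).subAt p) ((B.comapLab X e).subAt q) := by
  obtain ⟨η, hbij, harcs, hroot, hlab⟩ := h
  refine ⟨η, hbij, harcs, hroot, fun x => ?_⟩
  show η '' ({w ∈ B.lab (e x) | x ∈ X} ∩ B.belowSet p ∩ B.belowSet p) =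
    {w ∈ B.lab (e x) | x ∈ X} ∩ B.belowSet q ∩ B.belowSet q
  by_cases hx : x ∈ X
  · simp only [hx, and_true, Set.ofPred_mem_eq]
    exact hlab (e x)
  · simp [hx]

lemma sim_of_mulIso_subAt {L' : Type*} {A : LNet V L} {X : Set L} {B : LNet W L'}
    {e : L → L'} {θ : V → W} (hθ : MulIsoRelVia A X B e θ) (hoff : ∀ x ∉ X, A.lab x = ∅)
    {u v : V} (hu : u ∈ A.verts) (hv : v ∈ A.verts)
    (h : MulIso (B.subAt (θ u)) (B.subAt (θ v))) : A.Sim u v := by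
  have : Nonempty V := ⟨u⟩
  have hθ' := hθ.mulIsoVia_comapLab hoff
  exact Or.inr (((hθ'.subAt hu).mulIso.trans h.comapLab_subAt).trans
    ((hθ'.subAt hv).symm (Net.reaches_refl hv)).mulIso)

end LNet

namespace Net

variable {V : Type u} {N : Net V} {X' : Set V} {p q : List (Arc V)}

lemma append_mem_unfoldVerts (hq : q ∈ N.unfoldVerts) (hend : endOf N.root p = endOf N.root q)
    {s : List (Arc V)} (hs : p ++ s ∈ N.unfoldVerts) : q ++ s ∈ N.unfoldVerts := by
  obtain ⟨hw, htv⟩ := hs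
  rw [walkFrom_append, hend] at hw
  refine ⟨(walkFrom_append _ _ _ _).2 ⟨hq.1, hw.2⟩, ?_⟩
  rwa [endOf_append, ← hend, ← endOf_append]

lemma exists_append_of_unfoldNet_arcs_pos {z z' : List (Arc V)}
    (h : 0 < (N.unfoldNet X').arcs z z') : ∃ r, z' = z ++ r := by
  simp only [unfoldNet] at h
  split_ifs at h with hc
  · obtain ⟨-, -, r, -, hr, -⟩ := hc
    exact ⟨r, hr⟩
  · exact absurd h (lt_irrefl 0)

lemma unfoldNet_arcs_append_left (hp : p ∈ N.unfoldVerts) (hq : q ∈ N.unfoldVerts)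
    (hend : endOf N.root p = endOf N.root q) (s s' : List (Arc V)) :
    (N.unfoldNet X').arcs (q ++ s) (q ++ s') = (N.unfoldNet X').arcs (p ++ s) (p ++ s') := by
  have hcancel : ∀ t r : List (Arc V), t ++ s' = t ++ s ++ r ↔ s' = s ++ r := fun t r => by
    rw [List.append_assoc]; exact ⟨List.append_cancel_left, congrArg _⟩
  simp only [unfoldNet, hcancel]
  refine if_congr (and_congr ?_ (and_congr ?_ Iff.rfl)) rfl rfl <;>
    exact ⟨append_mem_unfoldVerts hp hend.symm, append_mem_unfoldVerts hq hend⟩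

lemma exists_append_of_unfoldNet_reaches (hp : p ∈ N.unfoldVerts) (hq : q ∈ N.unfoldVerts)
    (hend : endOf N.root p = endOf N.root q) {z : List (Arc V)}
    (h : (N.unfoldNet X').Reaches p z) : ∃ s, z = p ++ s ∧ (N.unfoldNet X').Reaches q (q ++ s) := by
  obtain ⟨-, hrtg⟩ := reaches_iff.1 h
  clear h
  induction hrtg with
  | refl => exact ⟨[], (List.append_nil p).symm, by simpa using reaches_refl hq⟩
  | tail _ hstep ih =>
      obtain ⟨s, rfl, hqs⟩ := ih
      obtain ⟨r, rfl⟩ := exists_append_of_unfoldNet_arcs_pos hstep.2.2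
      rw [List.append_assoc] at hstep ⊢
      obtain ⟨hq', hqs'⟩ := reaches_iff.1 hqs
      refine ⟨s ++ r, rfl, reaches_iff.2 ⟨hq', hqs'.tail ⟨hqs.mem_verts, ?_, ?_⟩⟩⟩
      · exact append_mem_unfoldVerts hq hend hstep.2.1
      · show 0 < _
        rw [unfoldNet_arcs_append_left hp hq hend]
        exact hstep.2.2

lemma unfoldNet_subAt_mulIso (hp : p ∈ N.unfoldVerts) (hq : q ∈ N.unfoldVerts)
    (hend : endOf N.root p = endOf N.root q) :
    LNet.MulIso ((N.unfoldNet X').subAt p) ((N.unfoldNet X').subAt q) := by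
  set U := N.unfoldNet X'
  set g : List (Arc V) → List (Arc V) := fun z => q ++ z.drop p.length
  have hg : ∀ s, g (p ++ s) = q ++ s := fun s => by simp [g]
  have hbij : Set.BijOn g (U.belowSet p) (U.belowSet q) := by
    refine ⟨fun z hz => ?_, fun z₁ h₁ z₂ h₂ he => ?_, fun y hy => ?_⟩
    · obtain ⟨s, rfl, hre⟩ := exists_append_of_unfoldNet_reaches hp hq hend hz
      rw [hg]; exact hre
    · obtain ⟨s₁, rfl, -⟩ := exists_append_of_unfoldNet_reaches hp hq hend h₁
      obtain ⟨s₂, rfl, -⟩ := exists_append_of_unfoldNet_reaches hp hq hend h₂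
      rw [hg, hg] at he
      rw [List.append_cancel_left he]
    · obtain ⟨s, rfl, hre⟩ := exists_append_of_unfoldNet_reaches hq hp hend.symm hy
      exact ⟨p ++ s, hre, hg s⟩
  refine ⟨g, hbij, fun a ha b hb => ?_, (by simpa using hg [] : g p = q),
    fun x => hbij.image_inter_eq fun z hz => ?_⟩
  · obtain ⟨s, rfl, -⟩ := exists_append_of_unfoldNet_reaches hp hq hend ha
    obtain ⟨s', rfl, -⟩ := exists_append_of_unfoldNet_reaches hp hq hend hb
    rw [LNet.subAt_arcs_of_mem _ (hbij.mapsTo ha) (hbij.mapsTo hb), LNet.subAt_arcs_of_mem _ ha hb,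
      hg, hg, unfoldNet_arcs_append_left hp hq hend]
  · obtain ⟨s, rfl, hre⟩ := exists_append_of_unfoldNet_reaches hp hq hend hz
    rw [hg]
    refine and_congr ?_ (iff_of_true hz hre)
    show p ++ s ∈ (if x ∈ X' then _ else ∅) ↔ q ++ s ∈ (if x ∈ X' then _ else ∅)
    split_ifs
    · exact and_congr (iff_of_true hz.mem_verts hre.mem_verts)
        (by rw [endOf_append, endOf_append, hend])
    · exact Iff.rfl

end Net

namespace LNet

variable {V : Type u} {L : Type v}

lemma foldUp_outDeg_inr (M : LNet V L) {c : Set V} (hc : M.IsClassOf c ∧ M.ClassHyb c) :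
    M.foldUp.outDeg (Sum.inr c) = 1 := by
  unfold Net.outDeg
  rw [finsum_eq_single _ (Sum.inl c) fun b hb => ?_]
  · exact if_pos ⟨rfl, hc⟩
  · rcases b with c' | c'
    · exact if_neg fun h => hb (congrArg Sum.inl h.1)
    · rfl

lemma mem_image_inl_of_isTreeVert {M : LNet V L} {X' : Set (Set V ⊕ Set V)}
    (hN : M.foldUp.IsXNetwork X') {t : Set V ⊕ Set V} (ht : M.foldUp.IsTreeVert t) :
    t ∈ Sum.inl '' M.classSet := by
  rcases ht.1 with ⟨c, ⟨w, hw, rfl⟩, rfl⟩ | ⟨c, hc, rfl⟩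
  · exact ⟨_, ⟨w, hw, rfl⟩, rfl⟩
  · have hout := M.foldUp_outDeg_inr hc
    have := hN.treeOutDeg _ ht.1 ht.2 (by rw [hout]; exact one_ne_zero)
    omega

end LNet

/-- The identification of `M` with `U(F(M))` is an arbitrary MUL-tree isomorphism `θ`; as
`Ψ_{F(M)}` is the identity on paths here, `Ψ_{F(M)}⁻¹(u)` is `θ u`. -/
theorem sound_sim_iff_same_end_general {V : Type u} {L : Type v} (X : Set L)
    (M : LNet V L) (hM : M.IsSound X)
    (θ : V → List (Arc (Set V ⊕ Set V)))
    (hθ : LNet.MulIsoRelVia M X (Net.unfoldNet M.foldUp (M.foldX X))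
      (fun x => Sum.inl (M.labClass x)) θ)
    (u v : V) (hu : u ∈ M.verts) (hv : v ∈ M.verts) :
    M.Sim u v ↔
      (Net.endOf M.foldUp.root (θ u) = Net.endOf M.foldUp.root (θ v) ∧
        M.foldUp.IsTreeVert (Net.endOf M.foldUp.root (θ u))) := by
  obtain ⟨hmul, hphylo⟩ := hM
  set E := fun w => Net.endOf M.foldUp.root (θ w)
  have hpath : ∀ w ∈ M.verts, θ w ∈ M.foldUp.unfoldVerts := fun w hw => hθ.1.mapsTo hw
  have hsim : ∀ a ∈ M.verts, ∀ b ∈ M.verts, E a = E b → M.Sim a b := fun a ha b hb he =>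
    LNet.sim_of_mulIso_subAt hθ hmul.labOff ha hb
      (Net.unfoldNet_subAt_mulIso (hpath a ha) (hpath b hb) he)
  refine ⟨fun huv => ⟨?_, (hpath u hu).2⟩, fun h => hsim u hu v hv h.1⟩
  have hfin : M.verts.Finite := hmul.pseudo.finite
  have hcard : (E '' M.verts).ncard ≤ (M.eqClass '' M.verts).ncard :=
    calc (E '' M.verts).ncard ≤ (Sum.inl '' M.classSet).ncard :=
          Set.ncard_le_ncard (Set.image_subset_iff.2 fun w hw =>
            LNet.mem_image_inl_of_isTreeVert hphylo.toIsXNetwork (hpath w hw).2)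
            ((hfin.image _).image _)
      _ = (M.eqClass '' M.verts).ncard := Set.ncard_image_of_injective _ Sum.inl_injective
  exact Set.apply_eq_of_apply_eq_of_ncard_image_le (hfin.image E)
    (fun a ha b hb he => LNet.eqClass_eq_of_sim ha (hsim a ha b hb he)) hcard hu hv
    (LNet.eqClass_eq_of_sim hu huv)

/-- Let `M` be a sound MUL-tree on `X` and let `u, v` be
vertices of `M`.  Then `u ∼ v` if and only if the directed paths
`Ψ_{F(M)}⁻¹(u)` and `Ψ_{F(M)}⁻¹(v)` in `F(M)` have the same end vertex
(which is necessarily a tree vertex of `F(M)`).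

Here the identification of `M` with `U(F(M))` is realized by an arbitrary
MUL-tree isomorphism `θ : M → U(F(M))`; since `Ψ_{F(M)}` is the identity on
paths in this formalization, the path `Ψ_{F(M)}⁻¹(u)` is `θ u`. -/
theorem sound_sim_iff_same_end {V : Type u} {L : Type v} (X : Set L)
    (M : LNet V L) (hX : 3 ≤ X.ncard) (hM : M.IsSound X)
    (θ : V → List (Arc (Set V ⊕ Set V)))
    (hθ : LNet.MulIsoRelVia M X (Net.unfoldNet M.foldUp (M.foldX X))
      (fun x => Sum.inl (M.labClass x)) θ)
    (u v : V) (hu : u ∈ M.verts) (hv : v ∈ M.verts) :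
    M.Sim u v ↔
      (Net.endOf M.foldUp.root (θ u) = Net.endOf M.foldUp.root (θ v) ∧
        M.foldUp.IsTreeVert (Net.endOf M.foldUp.root (θ u))) :=
  sound_sim_iff_same_end_general X M hM θ hθ u v hu hv

end Phylo
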